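/- Fix n ≥ 1 and let E be the Euclidean space ℝ^{2n} indexed by Fin n ⊕ Fin n, and let J be the canonical symplectic matrix. Let B be a real (2n)×(2n) matrix that is infinitesimally symplectic, i.e. Bᵀ·J + J·B = 0, and let H : E → ℝ be differentiable and infinitesimally invariant under B, i.e. ⟪∇H(x), B.mulVec x⟫ = 0 for all x ∈ E. Define the momentum function F : E → ℝ by F(x) = −(1/2)·⟪x, J.mulVec(B.mulVec x)⟫. Then along any solution x : ℝ → E of Hamilton's equations, i.e. any x with HasDerivAt x (J.mulVec(∇H(x(t)))) t for all t ∈ ℝ, the momentum is conserved: F(x(t)) = F(x(0)) for all t ∈ ℝ. -/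

import Mathlib

open Matrix
open scoped RealInnerProductSpace

/-! Since `Bᵀ J = -J B` and `Jᵀ = -J`, the matrix `J B` is symmetric, so `F(x) = -½⟪x, J B x⟫` is a
quadratic form with derivative `-⟪J B x, ẋ⟫`. Along a solution `ẋ = J ∇H(x)`, and `Jᵀ J = 1` turns
this into `-⟪B x, ∇H(x)⟫`, which vanishes by the invariance of `H`. -/

theorem HasDerivAt.inner_apply_self_of_isSymmetric {E : Type*} [NormedAddCommGroup E]
    [InnerProductSpace ℝ E] {A : E →L[ℝ] E} (hA : (A : E →ₗ[ℝ] E).IsSymmetric) {x : ℝ → E}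
    {x' : E} {t : ℝ} (hx : HasDerivAt x x' t) :
    HasDerivAt (fun s ↦ ⟪x s, A (x s)⟫) (2 * ⟪A (x t), x'⟫) t := by
  refine (hx.inner ℝ (A.hasFDerivAt.comp_hasDerivAt t hx)).congr_deriv ?_
  have hsymm : ⟪A (x t), x'⟫ = ⟪x t, A x'⟫ := hA (x t) x'
  rw [Function.comp_apply, ← hsymm, real_inner_comm x', two_mul]

theorem EuclideanSpace.real_inner_toLp_mulVec_right {m n : Type*} [Fintype m] [Fintype n]
    (M : Matrix m n ℝ) (u : m → ℝ) (v : n → ℝ) :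
    ⟪WithLp.toLp 2 u, WithLp.toLp 2 (M *ᵥ v)⟫ = ⟪WithLp.toLp 2 (Mᵀ *ᵥ u), WithLp.toLp 2 v⟫ := by
  simp only [EuclideanSpace.inner_toLp_toLp, star_trivial, dotProduct_mulVec, vecMul_transpose,
    dotProduct_comm]

namespace Matrix

variable {l R : Type*} [Fintype l] [DecidableEq l] [CommRing R]

theorem isSymm_J_mul {B : Matrix (l ⊕ l) (l ⊕ l) R} (hB : Bᵀ * J l R + J l R * B = 0) :
    (J l R * B).IsSymm := by
  rw [IsSymm, transpose_mul, J_transpose, mul_neg, neg_eq_iff_add_eq_zero, hB]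

theorem transpose_J_mul_J_mul (B : Matrix (l ⊕ l) (l ⊕ l) R) : (J l R)ᵀ * (J l R * B) = B := by
  rw [J_transpose, neg_mul, ← mul_assoc, J_squared, neg_mul, one_mul, neg_neg]

end Matrix

theorem noether_momentum_conservation_general (n : ℕ)
    (B : Matrix (Fin n ⊕ Fin n) (Fin n ⊕ Fin n) ℝ)
    (hB : Bᵀ * Matrix.J (Fin n) ℝ + Matrix.J (Fin n) ℝ * B = 0)
    (H : EuclideanSpace ℝ (Fin n ⊕ Fin n) → ℝ)
    (hinv : ∀ x : EuclideanSpace ℝ (Fin n ⊕ Fin n),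
      ⟪gradient H x, (WithLp.toLp 2 (B.mulVec x) : EuclideanSpace ℝ (Fin n ⊕ Fin n))⟫ = 0)
    (x : ℝ → EuclideanSpace ℝ (Fin n ⊕ Fin n))
    (hx : ∀ t : ℝ, HasDerivAt x
      (WithLp.toLp 2 ((Matrix.J (Fin n) ℝ).mulVec
        (gradient H (x t) : EuclideanSpace ℝ (Fin n ⊕ Fin n))) :
          EuclideanSpace ℝ (Fin n ⊕ Fin n)) t) :
    ∀ t : ℝ,
      -(1 / 2 : ℝ) *
          ⟪x t, (WithLp.toLp 2 ((Matrix.J (Fin n) ℝ).mulVec (B.mulVec (x t))) :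
            EuclideanSpace ℝ (Fin n ⊕ Fin n))⟫ =
        -(1 / 2 : ℝ) *
          ⟪x 0, (WithLp.toLp 2 ((Matrix.J (Fin n) ℝ).mulVec (B.mulVec (x 0))) :
            EuclideanSpace ℝ (Fin n ⊕ Fin n))⟫ := by
  set A := toEuclideanCLM (𝕜 := ℝ) (J (Fin n) ℝ * B)
  have hA : (A : EuclideanSpace ℝ (Fin n ⊕ Fin n) →ₗ[ℝ] _).IsSymmetric := by
    rw [coe_toEuclideanCLM_eq_toEuclideanLin, isSymmetric_toEuclideanLin_iff, IsHermitian,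
      conjTranspose_eq_transpose_of_trivial]
    exact isSymm_J_mul hB
  have hconst : ∀ t, HasDerivAt (fun s ↦ ⟪x s, A (x s)⟫) 0 t := by
    intro t
    have hdot : ⟪A (x t), WithLp.toLp 2 (J (Fin n) ℝ *ᵥ (gradient H (x t)).ofLp)⟫ = 0 := by
      rw [← WithLp.toLp_ofLp 2 (A (x t)), ofLp_toEuclideanCLM,
        EuclideanSpace.real_inner_toLp_mulVec_right, mulVec_mulVec, transpose_J_mul_J_mul,
        WithLp.toLp_ofLp, real_inner_comm]
      exact hinv (x t)
    simpa only [hdot, mul_zero] using (hx t).inner_apply_self_of_isSymmetric hA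
  intro t
  simp only [mulVec_mulVec]
  exact congrArg _ (is_const_of_deriv_eq_zero (fun s ↦ (hconst s).differentiableAt)
    (fun s ↦ (hconst s).deriv) t 0)

/-- Noether's theorem, linear phase space: if `B` is infinitesimally
symplectic (`Bᵀ·J + J·B = 0`) and `H` is infinitesimally invariant under `B`
(`⟪∇H(x), B·x⟫ = 0`), then the momentum `F(x) = −(1/2)·⟪x, J·B·x⟫` is conserved along
any solution of Hamilton's equations for `H`. -/
theorem noether_momentum_conservation (n : ℕ) (hn : 1 ≤ n)
    (B : Matrix (Fin n ⊕ Fin n) (Fin n ⊕ Fin n) ℝ)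
    (hB : Bᵀ * Matrix.J (Fin n) ℝ + Matrix.J (Fin n) ℝ * B = 0)
    (H : EuclideanSpace ℝ (Fin n ⊕ Fin n) → ℝ) (hH : Differentiable ℝ H)
    (hinv : ∀ x : EuclideanSpace ℝ (Fin n ⊕ Fin n),
      ⟪gradient H x, (WithLp.toLp 2 (B.mulVec x) : EuclideanSpace ℝ (Fin n ⊕ Fin n))⟫ = 0)
    (x : ℝ → EuclideanSpace ℝ (Fin n ⊕ Fin n))
    (hx : ∀ t : ℝ, HasDerivAt x
      (WithLp.toLp 2 ((Matrix.J (Fin n) ℝ).mulVec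
        (gradient H (x t) : EuclideanSpace ℝ (Fin n ⊕ Fin n))) :
          EuclideanSpace ℝ (Fin n ⊕ Fin n)) t) :
    ∀ t : ℝ,
      -(1 / 2 : ℝ) *
          ⟪x t, (WithLp.toLp 2 ((Matrix.J (Fin n) ℝ).mulVec (B.mulVec (x t))) :
            EuclideanSpace ℝ (Fin n ⊕ Fin n))⟫ =
        -(1 / 2 : ℝ) *
          ⟪x 0, (WithLp.toLp 2 ((Matrix.J (Fin n) ℝ).mulVec (B.mulVec (x 0))) :
            EuclideanSpace ℝ (Fin n ⊕ Fin n))⟫ :=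
  noether_momentum_conservation_general n B hB H hinv x hx
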